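/- arXiv:2604.02469 — 4 statements merged into one kernel-verified Lean document; each statement's English description precedes it below -/
import Mathlib

section
/- Let q be a prime power, let A ∈ 𝔽_q[T] be a monic polynomial, let 𝒮 be an arbitrary subset of the set of primes in 𝔽_q[T], and let f : ℕ → ℂ be a function with f(0) = 0. Then for every positive integer k, the sum over monic divisors B of A with B ∈ 𝒟(𝒮) of μ(B)·C(Ω(B)−1, k−1)·f(δ₁(B)) equals (−1)^k · Q_𝒮^{(k)}(A) · f(Δ_k(A)). -/
open Filter Topology Polynomial Asymptotics
open scoped Classical

variable {F : Type} [Field F] [Fintype F]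

/-- The Möbius function for (monic) polynomials over a finite field:
`μ(A) = 1` if `A = 1`, `(-1)^k` if `A` is a product of `k` distinct primes, `0` otherwise. -/
noncomputable def muFF (A : Polynomial F) : ℤ :=
  if Squarefree A then
    (-1) ^ (UniqueFactorizationMonoid.normalizedFactors A).toFinset.card
  else 0

/-- `𝒩(A)`: the set of degrees of prime (monic irreducible) divisors of `A`. -/
noncomputable def NSet (A : Polynomial F) : Finset ℕ :=
  (Finset.range (A.natDegree + 1)).filter fun d =>
    ∃ P : Polynomial F, P.Monic ∧ Irreducible P ∧ P ∣ A ∧ P.natDegree = d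

/-- `Ω(A)`: the number of distinct degrees of prime divisors of `A`. -/
noncomputable def OmegaFF (A : Polynomial F) : ℕ := (NSet A).card

/-- `δ_k(A)`: the `k`-th smallest element of `𝒩(A)` (and `0` if `k > Ω(A)`). -/
noncomputable def deltaSmall (k : ℕ) (A : Polynomial F) : ℕ :=
  ((NSet A).sort (· ≤ ·)).getD (k - 1) 0

/-- `Δ_k(A)`: the `k`-th largest element of `𝒩(A)` (and `0` if `k > Ω(A)`). -/
noncomputable def DeltaLarge (k : ℕ) (A : Polynomial F) : ℕ :=
  (((NSet A).sort (· ≤ ·)).reverse).getD (k - 1) 0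

/-- `P_min(A)`: the set of prime divisors of `A` of minimal degree `δ₁(A)`. -/
noncomputable def Pmin (A : Polynomial F) : Set (Polynomial F) :=
  {P | P.Monic ∧ Irreducible P ∧ P ∣ A ∧ P.natDegree = deltaSmall 1 A}

/-- `𝒟(𝒮)`: monic polynomials whose set of minimal-degree prime divisors is a
singleton `{P}` with `P ∈ 𝒮`. -/
noncomputable def DSet (S : Set (Polynomial F)) : Set (Polynomial F) :=
  {A | A.Monic ∧ ∃ P ∈ S, Pmin A = {P}}

/-- `Q_𝒮^{(k)}(A) = #{P ∈ 𝒮 : P ∣ A, deg P = Δ_k(A)}`. -/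
noncomputable def QS (S : Set (Polynomial F)) (k : ℕ) (A : Polynomial F) : ℕ :=
  {P | P ∈ S ∧ P ∣ A ∧ P.natDegree = DeltaLarge k A}.ncard

/-!
Only squarefree divisors contribute, and the squarefree `B ∣ A` in `𝒟(𝒮)` are the products
`P · ∏ t` with `P ∈ 𝒮` a prime factor of `A` and `t` a set of prime factors of `A` of degree
larger than `deg P`. For fixed `P`, the sum over `t` is `-f(deg P) ∑_t (-1)^|t| C(|deg t|, k - 1)`,
and an alternating sum over subsets sees them only through their sets of degrees, so it equals
`∑_{D ⊆ V} (-1)^|D| C(|D|, k - 1) = (-1)^(k-1) [|V| = k - 1]`, `V` being the set of degrees of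
prime factors of `A` above `deg P`. Thus only the `P` with `deg P = Δ_k(A)` survive.
-/

open Finset UniqueFactorizationMonoid

namespace Finset

section Alternating

variable {α β R : Type*} [DecidableEq β] [CommRing R]

lemma sum_powerset_neg_one_pow_card_mul_insert_of_mem (g : Finset β → R) {V : Finset β} {x : β}
    (hx : x ∈ V) : ∑ D ∈ V.powerset, (-1 : R) ^ #D * g (insert x D) = 0 := by
  rw [← insert_erase hx, sum_powerset_insert (notMem_erase x V), ← sum_add_distrib]
  refine sum_eq_zero fun D hD => ?_
  rw [card_insert_of_notMem fun h => notMem_erase x V (mem_powerset.1 hD h), insert_idem,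
    pow_succ]
  ring

theorem sum_powerset_neg_one_pow_card_mul_image [DecidableEq α] (w : α → β) (u : Finset α)
    (g : Finset β → R) :
    ∑ t ∈ u.powerset, (-1 : R) ^ #t * g (t.image w)
      = ∑ D ∈ (u.image w).powerset, (-1 : R) ^ #D * g D := by
  induction u using Finset.induction_on generalizing g with
  | empty => simp
  | insert a s ha ih =>
    have hinsert : ∑ t ∈ s.powerset, (-1 : R) ^ #(insert a t) * g ((insert a t).image w)
        = -∑ D ∈ (s.image w).powerset, (-1 : R) ^ #D * g (insert (w a) D) := by
      rw [← ih fun D => g (insert (w a) D), ← sum_neg_distrib]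
      refine sum_congr rfl fun t ht => ?_
      rw [card_insert_of_notMem fun h => ha (mem_powerset.1 ht h), image_insert, pow_succ]
      ring
    rw [sum_powerset_insert ha, hinsert, ih, image_insert]
    by_cases hwa : w a ∈ s.image w
    · rw [insert_eq_of_mem hwa, sum_powerset_neg_one_pow_card_mul_insert_of_mem g hwa, neg_zero,
        add_zero]
    · rw [sum_powerset_insert hwa, ← sum_neg_distrib]
      congr 1
      refine sum_congr rfl fun D hD => ?_
      rw [card_insert_of_notMem fun h => hwa (mem_powerset.1 hD h), pow_succ]
      ring

theorem sum_powerset_neg_one_pow_card_mul_choose_card (V : Finset β) (m : ℕ) :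
    ∑ D ∈ V.powerset, (-1 : R) ^ #D * ((#D).choose m : R) = if #V = m then (-1) ^ m else 0 := by
  induction V using Finset.induction_on generalizing m with
  | empty => cases m <;> simp
  | insert a V ha ih =>
    rw [sum_powerset_insert ha, card_insert_of_notMem ha, ← sum_add_distrib]
    have hcard : ∀ D ∈ V.powerset, #(insert a D) = #D + 1 := fun D hD =>
      card_insert_of_notMem fun h => ha (mem_powerset.1 hD h)
    cases m with
    | zero =>
      refine (sum_eq_zero fun D hD => ?_).trans (if_neg (Nat.succ_ne_zero _)).symm
      rw [hcard D hD, pow_succ]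
      simp
    | succ m =>
      have hpascal : ∀ D ∈ V.powerset, (-1 : R) ^ #D * ((#D).choose (m + 1) : R)
          + (-1 : R) ^ #(insert a D) * ((#(insert a D)).choose (m + 1) : R)
          = -((-1 : R) ^ #D * ((#D).choose m : R)) := fun D hD => by
        rw [hcard D hD, Nat.choose_succ_succ, pow_succ]
        push_cast
        ring
      rw [sum_congr rfl hpascal, sum_neg_distrib, ih m]
      simp only [Nat.add_right_cancel_iff, pow_succ]
      split_ifs <;> ring

theorem sum_powerset_neg_one_pow_card_mul_choose_card_image [DecidableEq α] (w : α → β)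
    (u : Finset α) (m : ℕ) :
    ∑ t ∈ u.powerset, (-1 : R) ^ #t * ((#(t.image w)).choose m : R)
      = if #(u.image w) = m then (-1) ^ m else 0 := by
  rw [sum_powerset_neg_one_pow_card_mul_image w u fun D => ((#D).choose m : R),
    sum_powerset_neg_one_pow_card_mul_choose_card]

lemma eq_and_eq_of_insert_eq_insert {γ : Type*} [DecidableEq α] [LinearOrder γ] {w : α → γ}
    {a b : α} {s t : Finset α} (hs : ∀ x ∈ s, w a < w x) (ht : ∀ x ∈ t, w b < w x)
    (h : insert a s = insert b t) : a = b ∧ s = t := by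
  have hab : a = b := by
    have ha : a ∈ insert b t := h ▸ mem_insert_self a s
    have hb : b ∈ insert a s := h ▸ mem_insert_self b t
    rcases mem_insert.1 ha with hab | hat
    · exact hab
    rcases mem_insert.1 hb with hba | hbs
    · exact hba.symm
    exact absurd (ht a hat) (hs b hbs).asymm
  subst hab
  refine ⟨rfl, ?_⟩
  rw [← erase_insert fun has => (hs a has).false, h, erase_insert fun hat => (ht a hat).false]

end Alternating

section Sorting

variable {α : Type*} [LinearOrder α]

lemma card_filter_orderEmbOfFin_lt (s : Finset α) (i : Fin #s) :
    #{x ∈ s | s.orderEmbOfFin rfl i < x} = #s - 1 - i := by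
  have himage : {x ∈ s | s.orderEmbOfFin rfl i < x} = (Ioi i).image (s.orderEmbOfFin rfl) := by
    ext x
    simp only [mem_filter, mem_image, mem_Ioi]
    constructor
    · rintro ⟨hx, hlt⟩
      obtain ⟨j, rfl⟩ : x ∈ Set.range (s.orderEmbOfFin rfl) := by
        rwa [range_orderEmbOfFin]
      exact ⟨j, (OrderEmbedding.lt_iff_lt _).1 hlt, rfl⟩
    · rintro ⟨j, hij, rfl⟩
      exact ⟨orderEmbOfFin_mem _ _ _, (OrderEmbedding.lt_iff_lt _).2 hij⟩
  rw [himage, card_image_of_injective _ (s.orderEmbOfFin rfl).injective, Fin.card_Ioi]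

lemma getD_reverse_sort_eq_orderEmbOfFin (s : Finset α) {k : ℕ} (hk : 0 < k) (hks : k ≤ #s)
    (x : α) : (s.sort (· ≤ ·)).reverse.getD (k - 1) x = s.orderEmbOfFin rfl ⟨#s - k, by omega⟩ := by
  rw [List.getD_eq_getElem?_getD, List.getElem?_eq_getElem (by simp; omega), Option.getD_some,
    List.getElem_reverse, orderEmbOfFin_apply]
  congr 1
  simp only [length_sort]
  omega

lemma card_filter_lt_eq_sub_one_iff {s : Finset α} {d : α} (hd : d ∈ s) {k : ℕ} (hk : 0 < k)
    (hks : k ≤ #s) (x : α) :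
    #{y ∈ s | d < y} = k - 1 ↔ (s.sort (· ≤ ·)).reverse.getD (k - 1) x = d := by
  obtain ⟨i, rfl⟩ : d ∈ Set.range (s.orderEmbOfFin rfl) := by rwa [range_orderEmbOfFin]
  rw [card_filter_orderEmbOfFin_lt, getD_reverse_sort_eq_orderEmbOfFin s hk hks,
    (s.orderEmbOfFin rfl).injective.eq_iff, Fin.ext_iff]
  have := i.isLt
  dsimp only
  omega

lemma getD_sort_zero_eq_min' {s : Finset α} (hs : s.Nonempty) (x : α) :
    (s.sort (· ≤ ·)).getD 0 x = s.min' hs := by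
  rw [min'_eq_sorted_zero, List.getD_eq_getElem?_getD, List.getElem?_eq_getElem, Option.getD_some]

end Sorting

end Finset

section Polynomial

variable {K : Type} [Field K]

lemma deltaSmall_one_eq_min' {B : K[X]} (h : (NSet B).Nonempty) :
    deltaSmall 1 B = (NSet B).min' h :=
  getD_sort_zero_eq_min' h 0

lemma DeltaLarge_eq_zero_of_card_lt {A : K[X]} {k : ℕ} (hk : #(NSet A) < k) :
    DeltaLarge k A = 0 := by
  rw [DeltaLarge, List.getD_eq_default]
  simp only [List.length_reverse, Finset.length_sort]
  omega

lemma mem_primeFactors_iff_monic_irreducible_dvd {A P : K[X]} (hA : A ≠ 0) :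
    P ∈ primeFactors A ↔ P.Monic ∧ Irreducible P ∧ P ∣ A := by
  rw [mem_primeFactors, Polynomial.mem_normalizedFactors_iff hA, and_left_comm]

lemma NSet_eq_image_primeFactors {A : K[X]} (hA : A ≠ 0) :
    NSet A = (primeFactors A).image natDegree := by
  ext d
  simp only [NSet, mem_filter, mem_range, mem_image, mem_primeFactors_iff_monic_irreducible_dvd hA]
  constructor
  · rintro ⟨-, P, hPm, hPi, hPA, rfl⟩
    exact ⟨P, ⟨hPm, hPi, hPA⟩, rfl⟩
  · rintro ⟨P, ⟨hPm, hPi, hPA⟩, rfl⟩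
    exact ⟨Nat.lt_succ_of_le (natDegree_le_of_dvd hPA hA), P, hPm, hPi, hPA, rfl⟩

lemma primeFactors_subset_of_dvd {A B : K[X]} (hA : A ≠ 0) (hBA : B ∣ A) :
    primeFactors B ⊆ primeFactors A := by
  intro P hP
  have hB : B ≠ 0 := ne_zero_of_dvd_ne_zero hA hBA
  obtain ⟨hPm, hPi, hPB⟩ := (mem_primeFactors_iff_monic_irreducible_dvd hB).1 hP
  exact (mem_primeFactors_iff_monic_irreducible_dvd hA).2 ⟨hPm, hPi, hPB.trans hBA⟩

lemma monic_irreducible_of_subset_primeFactors {A : K[X]} (hA : A ≠ 0) {s : Finset K[X]}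
    (hs : s ⊆ primeFactors A) : ∀ P ∈ s, P.Monic ∧ Irreducible P := fun _ hP =>
  ((mem_primeFactors_iff_monic_irreducible_dvd hA).1 (hs hP)).imp_right And.left

lemma prod_dvd_of_subset_primeFactors {A : K[X]} {s : Finset K[X]} (hs : s ⊆ primeFactors A) :
    ∏ P ∈ s, P ∣ A :=
  (prod_dvd_prod_of_subset s (primeFactors A) id hs).trans radical_dvd_self

lemma prod_primeFactors_of_squarefree {B : K[X]} (hB : B.Monic) (hsq : Squarefree B) :
    ∏ P ∈ primeFactors B, P = B :=
  eq_of_monic_of_associated (monic_prod_of_monic _ _ fun _ hP =>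
    ((mem_primeFactors_iff_monic_irreducible_dvd hB.ne_zero).1 hP).1) hB
    (radical_associated hsq.isRadical hB.ne_zero)

section Product

variable {s : Finset K[X]}

lemma monic_prod_of_monic_irreducible (hs : ∀ P ∈ s, P.Monic ∧ Irreducible P) :
    (∏ P ∈ s, P).Monic :=
  monic_prod_of_monic _ _ fun P hP => (hs P hP).1

lemma primeFactors_prod_of_monic_irreducible (hs : ∀ P ∈ s, P.Monic ∧ Irreducible P) :
    primeFactors (∏ P ∈ s, P) = s := by
  ext P
  rw [mem_primeFactors_iff_monic_irreducible_dvd (monic_prod_of_monic_irreducible hs).ne_zero]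
  constructor
  · rintro ⟨hPm, hPi, hPdvd⟩
    obtain ⟨Q, hQ, hPQ⟩ := (hPi.prime.dvd_finsetProd_iff _).1 hPdvd
    rwa [eq_of_monic_of_associated hPm (hs Q hQ).1 (hPi.associated_of_dvd (hs Q hQ).2 hPQ)]
  · intro hP
    exact ⟨(hs P hP).1, (hs P hP).2, dvd_prod_of_mem _ hP⟩

lemma muFF_prod_of_monic_irreducible (hs : ∀ P ∈ s, P.Monic ∧ Irreducible P) :
    muFF (∏ P ∈ s, P) = (-1) ^ #s := by
  have hsq : Squarefree (∏ P ∈ s, P) := by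
    simpa [radical, primeFactors_prod_of_monic_irreducible hs] using
      squarefree_radical (a := ∏ P ∈ s, P)
  rw [muFF, if_pos hsq, toFinset_normalizedFactors, primeFactors_prod_of_monic_irreducible hs]

lemma NSet_prod_of_monic_irreducible (hs : ∀ P ∈ s, P.Monic ∧ Irreducible P) :
    NSet (∏ P ∈ s, P) = s.image natDegree := by
  rw [NSet_eq_image_primeFactors (monic_prod_of_monic_irreducible hs).ne_zero,
    primeFactors_prod_of_monic_irreducible hs]

end Product

section MinimalPrime

variable {P : K[X]} {t : Finset K[X]}

lemma deltaSmall_one_prod_insert (hs : ∀ Q ∈ insert P t, Q.Monic ∧ Irreducible Q)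
    (ht : ∀ Q ∈ t, P.natDegree < Q.natDegree) :
    deltaSmall 1 (∏ Q ∈ insert P t, Q) = P.natDegree := by
  have hN := NSet_prod_of_monic_irreducible hs
  rw [deltaSmall_one_eq_min' (hN ▸ (insert_nonempty P t).image natDegree)]
  refine le_antisymm (min'_le _ _ (hN ▸ mem_image_of_mem _ (mem_insert_self P t)))
    (le_min' _ _ _ fun d hd => ?_)
  rw [hN, image_insert, mem_insert, mem_image] at hd
  rcases hd with rfl | ⟨Q, hQ, rfl⟩
  exacts [le_rfl, (ht Q hQ).le]

lemma Pmin_prod_insert (hs : ∀ Q ∈ insert P t, Q.Monic ∧ Irreducible Q)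
    (ht : ∀ Q ∈ t, P.natDegree < Q.natDegree) : Pmin (∏ Q ∈ insert P t, Q) = {P} := by
  have hB := (monic_prod_of_monic_irreducible hs).ne_zero
  ext Q
  simp only [Pmin, Set.mem_ofPred_eq, Set.mem_singleton_iff, deltaSmall_one_prod_insert hs ht]
  constructor
  · rintro ⟨hQm, hQi, hQB, hQdeg⟩
    have hQ : Q ∈ insert P t := by
      rw [← primeFactors_prod_of_monic_irreducible hs,
        mem_primeFactors_iff_monic_irreducible_dvd hB]
      exact ⟨hQm, hQi, hQB⟩
    rcases mem_insert.1 hQ with rfl | hQt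
    · rfl
    · exact absurd hQdeg (ht Q hQt).ne'
  · rintro rfl
    obtain ⟨hQm, hQi⟩ := hs Q (mem_insert_self Q t)
    exact ⟨hQm, hQi, dvd_prod_of_mem _ (mem_insert_self Q t), rfl⟩

lemma OmegaFF_prod_insert (hs : ∀ Q ∈ insert P t, Q.Monic ∧ Irreducible Q)
    (ht : ∀ Q ∈ t, P.natDegree < Q.natDegree) :
    OmegaFF (∏ Q ∈ insert P t, Q) = #(t.image natDegree) + 1 := by
  rw [OmegaFF, NSet_prod_of_monic_irreducible hs, image_insert, card_insert_of_notMem fun hP => ?_]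
  obtain ⟨Q, hQ, hQP⟩ := mem_image.1 hP
  exact (ht Q hQ).ne' hQP

lemma muFF_prod_insert (hs : ∀ Q ∈ insert P t, Q.Monic ∧ Irreducible Q)
    (ht : ∀ Q ∈ t, P.natDegree < Q.natDegree) :
    muFF (∏ Q ∈ insert P t, Q) = -(-1) ^ #t := by
  rw [muFF_prod_of_monic_irreducible hs, card_insert_of_notMem fun hP => (ht P hP).false, pow_succ,
    mul_neg_one]

lemma exists_mem_of_mem_DSet {S : Set K[X]} {B : K[X]} (hB : B ∈ DSet S) :
    ∃ P ∈ S, P ∈ primeFactors B ∧ ∀ Q ∈ (primeFactors B).erase P, P.natDegree < Q.natDegree := by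
  obtain ⟨hBm, P, hPS, hPmin⟩ := hB
  have hB0 := hBm.ne_zero
  obtain ⟨hPm, hPi, hPB, hPdeg⟩ : P ∈ Pmin B := hPmin ▸ Set.mem_singleton P
  refine ⟨P, hPS, (mem_primeFactors_iff_monic_irreducible_dvd hB0).2 ⟨hPm, hPi, hPB⟩, ?_⟩
  intro Q hQ
  obtain ⟨hQP, hQB⟩ := mem_erase.1 hQ
  obtain ⟨hQm, hQi, hQdvd⟩ := (mem_primeFactors_iff_monic_irreducible_dvd hB0).1 hQB
  have hQN : Q.natDegree ∈ NSet B := by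
    rw [NSet_eq_image_primeFactors hB0]
    exact mem_image_of_mem _ hQB
  have hle : P.natDegree ≤ Q.natDegree := by
    rw [hPdeg, deltaSmall_one_eq_min' ⟨_, hQN⟩]
    exact min'_le _ _ hQN
  refine hle.lt_of_ne fun hPQ => hQP ?_
  have hQmin : Q ∈ Pmin B := ⟨hQm, hQi, hQdvd, hPQ ▸ hPdeg⟩
  rwa [hPmin] at hQmin

end MinimalPrime

theorem finsum_mem_DSet_eq_sum_sum {M : Type*} [AddCommMonoid M] {A : K[X]} (hA : A ≠ 0)
    (S : Set K[X]) (g : K[X] → M) (hg : ∀ B, ¬Squarefree B → g B = 0) :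
    ∑ᶠ B ∈ {B : K[X] | B.Monic ∧ B ∣ A ∧ B ∈ DSet S}, g B
      = ∑ P ∈ primeFactors A with P ∈ S,
          ∑ t ∈ {Q ∈ primeFactors A | P.natDegree < Q.natDegree}.powerset,
            g (∏ Q ∈ insert P t, Q) := by
  set I := {P ∈ primeFactors A | P ∈ S}.sigma
    fun P => {Q ∈ primeFactors A | P.natDegree < Q.natDegree}.powerset
  have hI : ∀ x ∈ I, insert x.1 x.2 ⊆ primeFactors A ∧ x.1 ∈ S ∧
      ∀ Q ∈ x.2, x.1.natDegree < Q.natDegree := by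
    rintro ⟨P, t⟩ hx
    simp only [I, mem_sigma, mem_filter, mem_powerset, subset_iff] at hx
    exact ⟨insert_subset hx.1.1 fun Q hQ => (hx.2 hQ).1, hx.1.2, fun Q hQ => (hx.2 hQ).2⟩
  have hinj : Set.InjOn (fun x : Σ _ : K[X], Finset K[X] => ∏ Q ∈ insert x.1 x.2, Q) I := by
    rintro ⟨P, t⟩ hx ⟨P', t'⟩ hx' heq
    obtain ⟨hsub, -, hlt⟩ := hI _ hx
    obtain ⟨hsub', -, hlt'⟩ := hI _ hx'
    have := congrArg primeFactors heq
    simp only [primeFactors_prod_of_monic_irreducible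
      (monic_irreducible_of_subset_primeFactors hA hsub),
      primeFactors_prod_of_monic_irreducible
      (monic_irreducible_of_subset_primeFactors hA hsub')] at this
    obtain ⟨rfl, rfl⟩ := eq_and_eq_of_insert_eq_insert hlt hlt' this
    rfl
  rw [sum_sigma', ← sum_image hinj]
  apply finsum_mem_eq_sum_of_inter_support_eq
  ext B
  simp only [Set.mem_inter_iff, Set.mem_ofPred_eq, coe_image, Set.mem_image, mem_coe,
    Function.mem_support]
  constructor
  · rintro ⟨⟨hBm, hBA, hBD⟩, hgB⟩
    refine ⟨?_, hgB⟩
    have hsq : Squarefree B := by_contra fun h => hgB (hg B h)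
    obtain ⟨P, hPS, hPB, hlt⟩ := exists_mem_of_mem_DSet hBD
    have hBA' := primeFactors_subset_of_dvd hA hBA
    refine ⟨⟨P, (primeFactors B).erase P⟩, ?_, ?_⟩
    · simp only [I, mem_sigma, mem_filter, mem_powerset]
      exact ⟨⟨hBA' hPB, hPS⟩, fun Q hQ => mem_filter.2 ⟨hBA' (mem_of_mem_erase hQ), hlt Q hQ⟩⟩
    · simp only [insert_erase hPB, prod_primeFactors_of_squarefree hBm hsq]
  · rintro ⟨⟨⟨P, t⟩, hx, rfl⟩, hgB⟩
    obtain ⟨hsub, hPS, hlt⟩ := hI _ hx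
    have hs := monic_irreducible_of_subset_primeFactors hA hsub
    have hm := monic_prod_of_monic_irreducible hs
    exact ⟨⟨hm, prod_dvd_of_subset_primeFactors hsub, hm, P, hPS, Pmin_prod_insert hs hlt⟩, hgB⟩

lemma neg_mul_ite_card_filter_lt_eq {A : K[X]} {d : ℕ} (hd : d ∈ NSet A) (f : ℕ → ℂ) (hf : f 0 = 0)
    {k : ℕ} (hk : 0 < k) :
    -f d * (if #{x ∈ NSet A | d < x} = k - 1 then (-1) ^ (k - 1) else 0)
      = (-1) ^ k * if d = DeltaLarge k A then f (DeltaLarge k A) else 0 := by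
  obtain ⟨j, rfl⟩ : ∃ j, k = j + 1 := ⟨k - 1, by omega⟩
  by_cases hkN : j + 1 ≤ #(NSet A)
  · have hΔ : #{x ∈ NSet A | d < x} = j + 1 - 1 ↔ d = DeltaLarge (j + 1) A :=
      (card_filter_lt_eq_sub_one_iff hd hk hkN 0).trans eq_comm
    split_ifs with h1 h2 h2
    · rw [← h2, Nat.add_sub_cancel, pow_succ]
      ring
    · exact absurd (hΔ.1 h1) h2
    · exact absurd (hΔ.2 h2) h1
    · ring
  · have hcard : #{x ∈ NSet A | d < x} < #(NSet A) :=
      card_lt_card (filter_ssubset.2 ⟨d, hd, lt_irrefl d⟩)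
    -- past `Ω(A)` the convention `Δ_k(A) = 0` meets `f 0 = 0`
    rw [if_neg (by omega), DeltaLarge_eq_zero_of_card_lt (by omega), hf]
    simp

lemma sum_powerset_muFF_mul_choose_mul_prod_insert {A P : K[X]} (hA : A ≠ 0)
    (hP : P ∈ primeFactors A) (f : ℕ → ℂ) (hf : f 0 = 0) {k : ℕ} (hk : 0 < k) :
    ∑ t ∈ {Q ∈ primeFactors A | P.natDegree < Q.natDegree}.powerset,
        (muFF (∏ Q ∈ insert P t, Q) : ℂ) * ((OmegaFF (∏ Q ∈ insert P t, Q) - 1).choose (k - 1) : ℂ)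
          * f (deltaSmall 1 (∏ Q ∈ insert P t, Q))
      = (-1) ^ k * if P.natDegree = DeltaLarge k A then f (DeltaLarge k A) else 0 := by
  have hterm : ∀ t ∈ {Q ∈ primeFactors A | P.natDegree < Q.natDegree}.powerset,
      (muFF (∏ Q ∈ insert P t, Q) : ℂ) * ((OmegaFF (∏ Q ∈ insert P t, Q) - 1).choose (k - 1) : ℂ)
          * f (deltaSmall 1 (∏ Q ∈ insert P t, Q))
        = -f P.natDegree * ((-1) ^ #t * ((#(t.image natDegree)).choose (k - 1) : ℂ)) := by
    intro t ht
    have hmem : ∀ Q ∈ t, Q ∈ primeFactors A ∧ P.natDegree < Q.natDegree := fun Q hQ =>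
      mem_filter.1 (mem_powerset.1 ht hQ)
    have hlt : ∀ Q ∈ t, P.natDegree < Q.natDegree := fun Q hQ => (hmem Q hQ).2
    have hs := monic_irreducible_of_subset_primeFactors hA
      (insert_subset hP fun Q hQ => (hmem Q hQ).1)
    rw [muFF_prod_insert hs hlt, OmegaFF_prod_insert hs hlt, Nat.add_sub_cancel,
      deltaSmall_one_prod_insert hs hlt]
    push_cast
    ring
  have himage : {Q ∈ primeFactors A | P.natDegree < Q.natDegree}.image natDegree
      = {d ∈ NSet A | P.natDegree < d} := by
    rw [NSet_eq_image_primeFactors hA, filter_image]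
  have hd : P.natDegree ∈ NSet A := NSet_eq_image_primeFactors hA ▸ mem_image_of_mem _ hP
  rw [sum_congr rfl hterm, ← mul_sum, sum_powerset_neg_one_pow_card_mul_choose_card_image, himage,
    neg_mul_ite_card_filter_lt_eq hd f hf hk]

lemma QS_eq_card_filter {A : K[X]} (hA : A ≠ 0) {S : Set K[X]}
    (hS : S ⊆ {P : K[X] | P.Monic ∧ Irreducible P}) (k : ℕ) :
    QS S k A = #{P ∈ primeFactors A | P ∈ S ∧ P.natDegree = DeltaLarge k A} := by
  rw [QS, ← Set.ncard_coe_finset]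
  congr 1
  ext P
  simp only [coe_filter, Set.mem_ofPred_eq, mem_primeFactors_iff_monic_irreducible_dvd hA]
  constructor
  · rintro ⟨hPS, hPA, hdeg⟩
    exact ⟨⟨(hS hPS).1, (hS hPS).2, hPA⟩, hPS, hdeg⟩
  · rintro ⟨⟨-, -, hPA⟩, hPS, hdeg⟩
    exact ⟨hPS, hPA, hdeg⟩

end Polynomial

/-- Higher order duality over 𝔽_q[T] (Theorem 2.1). -/
theorem stmt0 (A : Polynomial F) (hA : A.Monic)
    (S : Set (Polynomial F)) (hS : S ⊆ {P : Polynomial F | P.Monic ∧ Irreducible P})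
    (f : ℕ → ℂ) (hf : f 0 = 0) (k : ℕ) (hk : 0 < k) :
    ∑ᶠ B ∈ {B : Polynomial F | B.Monic ∧ B ∣ A ∧ B ∈ DSet S},
        (muFF B : ℂ) * (Nat.choose (OmegaFF B - 1) (k - 1) : ℂ) * f (deltaSmall 1 B)
      = (-1) ^ k * (QS S k A : ℂ) * f (DeltaLarge k A) := by
  have hA0 := hA.ne_zero
  rw [finsum_mem_DSet_eq_sum_sum hA0 S _ fun B hB => by simp [muFF, hB],
    sum_congr rfl fun P hP =>
      sum_powerset_muFF_mul_choose_mul_prod_insert hA0 (mem_filter.1 hP).1 f hf hk,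
    ← mul_sum, sum_ite, sum_const_zero, add_zero, sum_const, nsmul_eq_mul, filter_filter,
    QS_eq_card_filter hA0 hS]
  ring
end

section
/- Let q be a prime power, let A ∈ 𝔽_q[T] be monic, and let f : ℝ → ℝ be any function. Then the sum over monic divisors B of A of μ(B)·f(Ω(B)) equals (−1)^{Ω(A)} · D_{Ω(A)} f(0), where D_n denotes the n-th forward difference operator. -/
open Filter Topology Polynomial Asymptotics
open scoped Classical

variable {F : Type} [Field F] [Fintype F]

/-- The `n`-th forward difference operator: `D₀ f = f`,
`D_{n+1} f x = D_n f (x+1) - D_n f x`. -/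
def fwdDiffIter : ℕ → (ℝ → ℝ) → (ℝ → ℝ)
  | 0, f => f
  | n + 1, f => fun x => fwdDiffIter n f (x + 1) - fwdDiffIter n f x

/-!
Only squarefree divisors contribute, and the squarefree monic divisors of `A` are the products
`∏ s` over the subsets `s` of the set `P` of monic prime factors of `A`, with
`μ(∏ s) = (-1)^#s` and `Ω(∏ s) = #(deg '' s)`. Grouping the subsets `s ⊆ P` by their set of
degrees `T`, the signed count of the `s` with `deg '' s = T` is `(-1)^#T`, because each degree
in `T` is hit by a nonempty subset of its degree class and these have signed count `-1`.
The sum thus becomes `∑_{T ⊆ 𝒩(A)} (-1)^#T f(#T) = ∑_k (-1)^k C(n, k) f(k)` with `n = Ω(A)`,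
which is Newton's formula for `(-1)^n D_n f(0)`.
-/

open Finset UniqueFactorizationMonoid

namespace Finset

variable {α β R : Type*} [DecidableEq α] [DecidableEq β] [CommRing R]

theorem sum_powerset_neg_one_pow_card_mul_insert_of_mem_s4 {b : β} {Q : Finset β} (hb : b ∈ Q)
    (F : Finset β → R) : ∑ T ∈ Q.powerset, (-1) ^ #T * F (insert b T) = 0 := by
  rw [← insert_erase hb, sum_powerset_insert (notMem_erase b Q), ← sum_add_distrib]
  refine sum_eq_zero fun T hT => ?_
  have hbT : b ∉ T := fun h => notMem_erase b Q (mem_powerset.1 hT h)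
  rw [insert_idem, card_insert_of_notMem hbT, pow_succ]
  ring

theorem sum_powerset_insert_neg_one_pow_card_mul (b : β) (Q : Finset β) (F : Finset β → R) :
    ∑ T ∈ (insert b Q).powerset, (-1) ^ #T * F T
      = ∑ T ∈ Q.powerset, (-1) ^ #T * (F T - F (insert b T)) := by
  simp_rw [mul_sub, sum_sub_distrib]
  by_cases hb : b ∈ Q
  · rw [insert_eq_of_mem hb, sum_powerset_neg_one_pow_card_mul_insert_of_mem_s4 hb, sub_zero]
  · rw [sum_powerset_insert hb, sub_eq_add_neg, ← sum_neg_distrib]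
    congr 1
    refine sum_congr rfl fun T hT => ?_
    rw [card_insert_of_notMem fun h => hb (mem_powerset.1 hT h), pow_succ]
    ring

theorem sum_powerset_neg_one_pow_card_mul_image_s4 (g : α → β) (P : Finset α)
    (F : Finset β → R) :
    ∑ s ∈ P.powerset, (-1) ^ #s * F (s.image g)
      = ∑ T ∈ (P.image g).powerset, (-1) ^ #T * F T := by
  induction P using Finset.induction_on generalizing F with
  | empty => simp
  | insert a P ha ih =>
    rw [sum_powerset_insert ha, image_insert, sum_powerset_insert_neg_one_pow_card_mul,
      ← ih, ← sum_add_distrib]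
    refine sum_congr rfl fun s hs => ?_
    rw [image_insert, card_insert_of_notMem fun h => ha (mem_powerset.1 hs h), pow_succ]
    ring

end Finset

theorem fwdDiffIter_eq_iterate_fwdDiff (n : ℕ) (f : ℝ → ℝ) :
    fwdDiffIter n f = (fwdDiff 1)^[n] f := by
  induction n with
  | zero => rfl
  | succ n ih =>
    ext x
    rw [Function.iterate_succ_apply', ← ih]
    rfl

theorem Finset.sum_powerset_neg_one_pow_card_mul_apply_card {β : Type*} (Q : Finset β)
    (f : ℝ → ℝ) :
    ∑ T ∈ Q.powerset, (-1) ^ #T * f #T = (-1) ^ #Q * fwdDiffIter #Q f 0 := by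
  rw [sum_powerset_apply_card (fun k : ℕ => (-1 : ℝ) ^ k * f k), fwdDiffIter_eq_iterate_fwdDiff,
    fwdDiff_iter_eq_sum_shift, mul_sum]
  refine sum_congr rfl fun k hk => ?_
  obtain ⟨j, hj⟩ := Nat.exists_eq_add_of_le (Nat.lt_succ_iff.1 (mem_range.1 hk))
  rw [hj, Nat.add_sub_cancel_left, zsmul_eq_mul, nsmul_eq_mul, zero_add, nsmul_one]
  have hsq : ((-1 : ℝ) ^ j) ^ 2 = 1 := by rw [← pow_mul, pow_mul', neg_one_sq, one_pow]
  push_cast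
  linear_combination -(((k + j).choose k : ℝ) * (-1) ^ k * f k) * hsq

theorem UniqueFactorizationMonoid.squarefree_prod_of_subset_primeFactors {M : Type*}
    [CommMonoidWithZero M] [NormalizationMonoid M] [UniqueFactorizationMonoid M] {a : M}
    {s : Finset M} (hs : s ⊆ primeFactors a) : Squarefree (∏ p ∈ s, p) :=
  squarefree_radical.squarefree_of_dvd (prod_dvd_prod_of_subset _ _ _ hs)

namespace Polynomial

section Field

variable {K : Type*} [Field K]

theorem mem_primeFactors_iff {p A : K[X]} (hA : A ≠ 0) :
    p ∈ primeFactors A ↔ Irreducible p ∧ p.Monic ∧ p ∣ A := by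
  rw [mem_primeFactors, Polynomial.mem_normalizedFactors_iff hA]

theorem monic_prod_of_subset_primeFactors {A : K[X]} {s : Finset K[X]} (hA : A ≠ 0)
    (hs : s ⊆ primeFactors A) : (∏ p ∈ s, p).Monic :=
  monic_prod_of_monic s id fun _ hp => ((mem_primeFactors_iff hA).1 (hs hp)).2.1

theorem primeFactors_prod_of_subset {A : K[X]} {s : Finset K[X]} (hA : A ≠ 0)
    (hs : s ⊆ primeFactors A) : primeFactors (∏ p ∈ s, p) = s := by
  have hirr : ∀ p ∈ s, Irreducible p ∧ p.Monic :=
    fun p hp => ((mem_primeFactors_iff hA).1 (hs hp)).imp_right And.left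
  ext p
  rw [mem_primeFactors_iff (monic_prod_of_subset_primeFactors hA hs).ne_zero]
  constructor
  · rintro ⟨hp, hpm, hdvd⟩
    obtain ⟨q, hq, hpq⟩ := (hp.prime.dvd_finsetProd_iff _).1 hdvd
    rwa [eq_of_monic_of_associated hpm (hirr q hq).2 (hp.associated_of_dvd (hirr q hq).1 hpq)]
  · intro hp
    exact ⟨(hirr p hp).1, (hirr p hp).2, dvd_prod_of_mem _ hp⟩

theorem monic_dvd_squarefree_eq_image_powerset_primeFactors {A : K[X]} (hA : A ≠ 0) :
    {B : K[X] | B.Monic ∧ B ∣ A} ∩ {B | Squarefree B}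
      = (fun s => ∏ p ∈ s, p) '' ((primeFactors A).powerset : Set (Finset K[X])) := by
  ext B
  constructor
  · rintro ⟨⟨hBm, hBA⟩, hBsq⟩
    refine ⟨primeFactors B, ?_, ?_⟩
    · rw [mem_coe, mem_powerset]
      intro p hp
      obtain ⟨hpi, hpm, hpB⟩ := (mem_primeFactors_iff hBm.ne_zero).1 hp
      exact (mem_primeFactors_iff hA).2 ⟨hpi, hpm, hpB.trans hBA⟩
    · exact eq_of_monic_of_associated (monic_prod_of_subset_primeFactors hBm.ne_zero subset_rfl)
        hBm (radical_associated hBsq.isRadical hBm.ne_zero)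
  · rintro ⟨s, hs, rfl⟩
    rw [mem_coe, mem_powerset] at hs
    have hdvd : ∏ p ∈ s, p ∣ radical A := prod_dvd_prod_of_subset _ _ _ hs
    exact ⟨⟨monic_prod_of_subset_primeFactors hA hs, hdvd.trans radical_dvd_self⟩,
      squarefree_prod_of_subset_primeFactors hs⟩

theorem finsum_mem_monic_dvd_eq_sum_powerset_primeFactors {M : Type*} [AddCommMonoid M]
    {A : K[X]} (hA : A ≠ 0) (φ : K[X] → M) (hφ : ∀ B, ¬ Squarefree B → φ B = 0) :
    ∑ᶠ B ∈ {B : K[X] | B.Monic ∧ B ∣ A}, φ B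
      = ∑ s ∈ (primeFactors A).powerset, φ (∏ p ∈ s, p) := by
  have hsupp : Function.support φ ⊆ {B | Squarefree B} :=
    fun B hB => by_contra fun h => hB (hφ B h)
  have hinj :
      Set.InjOn (fun s => ∏ p ∈ s, p) ((primeFactors A).powerset : Set (Finset K[X])) := by
    intro s hs t ht hst
    rw [← primeFactors_prod_of_subset hA (mem_powerset.1 hs),
      ← primeFactors_prod_of_subset hA (mem_powerset.1 ht)]
    exact congrArg primeFactors hst
  rw [finsum_mem_eq_sum_of_inter_support_eq (t := (primeFactors A).powerset.image _) φ,
    sum_image hinj]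
  rw [coe_image, ← monic_dvd_squarefree_eq_image_powerset_primeFactors hA, Set.inter_assoc,
    Set.inter_eq_right.2 hsupp]

end Field

variable {K : Type} [Field K]

theorem muFF_prod_of_subset_primeFactors {A : K[X]} {s : Finset K[X]} (hA : A ≠ 0)
    (hs : s ⊆ primeFactors A) : muFF (∏ p ∈ s, p) = (-1) ^ #s := by
  rw [muFF, if_pos (squarefree_prod_of_subset_primeFactors hs), toFinset_normalizedFactors,
    primeFactors_prod_of_subset hA hs]

theorem NSet_eq_image_primeFactors {B : K[X]} (hB : B ≠ 0) :
    NSet B = (primeFactors B).image natDegree := by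
  ext d
  simp only [NSet, mem_filter, mem_range, mem_image, mem_primeFactors_iff hB]
  constructor
  · rintro ⟨-, p, hpm, hpi, hpB, rfl⟩
    exact ⟨p, ⟨hpi, hpm, hpB⟩, rfl⟩
  · rintro ⟨p, ⟨hpi, hpm, hpB⟩, rfl⟩
    exact ⟨Nat.lt_succ_of_le (natDegree_le_of_dvd hpB hB), p, hpm, hpi, hpB, rfl⟩

theorem OmegaFF_eq_card_image_primeFactors {B : K[X]} (hB : B ≠ 0) :
    OmegaFF B = #((primeFactors B).image natDegree) :=
  congrArg card (NSet_eq_image_primeFactors hB)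

theorem OmegaFF_prod_of_subset_primeFactors {A : K[X]} {s : Finset K[X]} (hA : A ≠ 0)
    (hs : s ⊆ primeFactors A) : OmegaFF (∏ p ∈ s, p) = #(s.image natDegree) := by
  rw [OmegaFF_eq_card_image_primeFactors (monic_prod_of_subset_primeFactors hA hs).ne_zero,
    primeFactors_prod_of_subset hA hs]

end Polynomial

/-- Lemma 4.3: `∑_{B ∣ A} μ(B) f(Ω(B)) = (-1)^{Ω(A)} D_{Ω(A)} f (0)`. -/
theorem stmt4 (A : Polynomial F) (hA : A.Monic) (f : ℝ → ℝ) :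
    ∑ᶠ B ∈ {B : Polynomial F | B.Monic ∧ B ∣ A},
        (muFF B : ℝ) * f (OmegaFF B : ℝ)
      = (-1) ^ OmegaFF A * fwdDiffIter (OmegaFF A) f 0 := by
  have hA0 : A ≠ 0 := hA.ne_zero
  have hvanish : ∀ B : F[X], ¬ Squarefree B → (muFF B : ℝ) * f (OmegaFF B) = 0 :=
    fun B hB => by rw [muFF, if_neg hB, Int.cast_zero, zero_mul]
  have hterm : ∀ s ∈ (primeFactors A).powerset,
      (muFF (∏ p ∈ s, p) : ℝ) * f (OmegaFF (∏ p ∈ s, p))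
        = (-1) ^ #s * f #(s.image natDegree) := by
    intro s hs
    rw [muFF_prod_of_subset_primeFactors hA0 (mem_powerset.1 hs),
      OmegaFF_prod_of_subset_primeFactors hA0 (mem_powerset.1 hs), Int.cast_pow, Int.cast_neg,
      Int.cast_one]
  rw [finsum_mem_monic_dvd_eq_sum_powerset_primeFactors hA0 _ hvanish, sum_congr rfl hterm,
    sum_powerset_neg_one_pow_card_mul_image_s4 natDegree _ fun T => f #T,
    sum_powerset_neg_one_pow_card_mul_apply_card, OmegaFF_eq_card_image_primeFactors hA0]
end

section
/- Let q be a prime power and let A ∈ 𝔽_q[T] be a monic polynomial. Then the sum over monic divisors B of A of μ(B)·Ω(B) equals −1 if A is a (nonempty) product of primes all of the same degree, and equals 0 otherwise. -/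
open Filter Topology Polynomial Asymptotics
open scoped Classical

variable {F : Type} [Field F] [Fintype F]

/-!
Only squarefree divisors contribute, and these are the products `∏ S` over the subsets `S` of the
set `𝒫` of monic prime factors of `A`, with `μ(∏ S) = (-1)^#S` and `Ω(∏ S) = #deg(S)`. Writing
`#deg(S) = ∑_{d ∈ deg(𝒫)} [d ∈ deg(S)]` and swapping the sums, the alternating sum over the subsets
that contain a prime of degree `d` is minus the alternating sum over all subsets of the primes of
degree `≠ d`, so it is `-1` if every prime in `𝒫 ≠ ∅` has degree `d`, and `0` otherwise.
-/

open UniqueFactorizationMonoid Finset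

section Combinatorics

variable {α β : Type*}

lemma sum_powerset_filter_exists_neg_one_pow_card {X : Finset α} (hX : X.Nonempty)
    (P : α → Prop) [DecidablePred P] :
    ∑ S ∈ X.powerset with ∃ p ∈ S, P p, (-1 : ℤ) ^ #S = -if ∀ p ∈ X, P p then 1 else 0 := by
  have hcompl : {S ∈ X.powerset | ¬∃ p ∈ S, P p} = (X.filter (¬P ·)).powerset := by
    ext S
    simp only [mem_filter, mem_powerset, not_exists, not_and, subset_iff]
    grind
  have hsplit := sum_filter_add_sum_filter_not X.powerset (fun S => ∃ p ∈ S, P p)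
    (fun S => (-1 : ℤ) ^ #S)
  rw [sum_powerset_neg_one_pow_card_of_nonempty hX, hcompl, sum_powerset_neg_one_pow_card] at hsplit
  simp only [filter_eq_empty_iff, not_not] at hsplit
  linarith

lemma card_image_eq_one_iff [DecidableEq β] {X : Finset α} {g : α → β} :
    #(X.image g) = 1 ↔ X.Nonempty ∧ ∃ d, ∀ p ∈ X, g p = d := by
  constructor
  · intro h
    obtain ⟨d, hd⟩ := card_eq_one.mp h
    exact ⟨image_nonempty.mp (hd ▸ singleton_nonempty d), d,
      fun p hp => mem_singleton.mp (hd ▸ mem_image_of_mem g hp)⟩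
  · rintro ⟨hX, d, hd⟩
    have hsub : X.image g ⊆ {d} := image_subset_iff.mpr fun p hp => mem_singleton.mpr (hd p hp)
    exact card_eq_one.mpr ⟨d, (subset_singleton_iff.mp hsub).resolve_left (hX.image g).ne_empty⟩

lemma sum_powerset_neg_one_pow_card_mul_card_image [DecidableEq β] (X : Finset α) (g : α → β) :
    ∑ S ∈ X.powerset, (-1 : ℤ) ^ #S * #(S.image g) = if #(X.image g) = 1 then -1 else 0 := by
  have hcard : ∀ S ∈ X.powerset,
      (#(S.image g) : ℤ) = ∑ d ∈ X.image g, if ∃ p ∈ S, g p = d then 1 else 0 := by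
    intro S hS
    rw [sum_boole]
    congr 2
    ext d
    simp only [mem_filter, mem_image]
    grind
  calc ∑ S ∈ X.powerset, (-1 : ℤ) ^ #S * #(S.image g)
      = ∑ d ∈ X.image g, ∑ S ∈ X.powerset with ∃ p ∈ S, g p = d, (-1 : ℤ) ^ #S := by
        rw [sum_congr rfl fun S hS => by rw [hcard S hS, mul_sum], sum_comm]
        simp only [mul_boole, sum_filter]
    _ = ∑ d ∈ X.image g, -if ∀ p ∈ X, g p = d then (1 : ℤ) else 0 :=
        sum_congr rfl fun d hd =>
          sum_powerset_filter_exists_neg_one_pow_card (image_nonempty.mp ⟨d, hd⟩) _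
    _ = if #(X.image g) = 1 then -1 else 0 := by
        split_ifs with h
        · obtain ⟨a, ha⟩ := card_eq_one.mp h
          have hconst : ∀ p ∈ X, g p = a := fun p hp =>
            mem_singleton.mp (ha ▸ mem_image_of_mem g hp)
          rw [ha, sum_singleton, if_pos hconst]
        · refine sum_eq_zero fun d hd => ?_
          rw [if_neg, neg_zero]
          exact fun hconst => h (card_image_eq_one_iff.mpr ⟨image_nonempty.mp ⟨d, hd⟩, d, hconst⟩)

end Combinatorics

section NormalizedFactors

variable {α : Type*} [CommMonoidWithZero α] [NormalizationMonoid α] [UniqueFactorizationMonoid α]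
  [DecidableEq α] {a : α} {S : Finset α}

lemma prod_dvd_of_subset_normalizedFactors (ha : a ≠ 0)
    (hS : S ⊆ (normalizedFactors a).toFinset) : ∏ p ∈ S, p ∣ a :=
  (prod_dvd_prod_of_subset S _ id hS).trans
    ((Multiset.toFinset_prod_dvd_prod _).trans (prod_normalizedFactors ha).dvd)

lemma normalizedFactors_prod_of_subset_normalizedFactors
    (hS : S ⊆ (normalizedFactors a).toFinset) : normalizedFactors (∏ p ∈ S, p) = S.val := by
  have hS' : ∀ p ∈ S.val, p ∈ normalizedFactors a := fun p hp =>
    Multiset.mem_toFinset.mp (hS hp)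
  rw [prod_eq_multiset_prod, Multiset.map_id',
    normalizedFactors_prod_eq _ fun p hp => irreducible_of_normalized_factor p (hS' p hp),
    Multiset.map_congr rfl fun p hp => normalize_normalized_factor p (hS' p hp), Multiset.map_id']

lemma squarefree_prod_of_subset_normalizedFactors (ha : a ≠ 0)
    (hS : S ⊆ (normalizedFactors a).toFinset) : Squarefree (∏ p ∈ S, p) := by
  rw [squarefree_iff_nodup_normalizedFactors
      (ne_zero_of_dvd_ne_zero ha (prod_dvd_of_subset_normalizedFactors ha hS)),
    normalizedFactors_prod_of_subset_normalizedFactors hS]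
  exact S.nodup

lemma injOn_prod_powerset_normalizedFactors :
    Set.InjOn (fun S => ∏ p ∈ S, p) ((normalizedFactors a).toFinset.powerset : Set (Finset α)) := by
  intro S hS T hT hST
  rw [mem_coe, mem_powerset] at hS hT
  rw [← val_inj, ← normalizedFactors_prod_of_subset_normalizedFactors hS,
    ← normalizedFactors_prod_of_subset_normalizedFactors hT]
  exact congrArg normalizedFactors hST

lemma associated_prod_toFinset_normalizedFactors [Nontrivial α] {b : α} (hb : Squarefree b) :
    Associated (∏ p ∈ (normalizedFactors b).toFinset, p) b := by
  have hnodup := (squarefree_iff_nodup_normalizedFactors hb.ne_zero).mp hb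
  rw [prod_eq_multiset_prod, Multiset.toFinset_val, hnodup.dedup, Multiset.map_id']
  exact prod_normalizedFactors hb.ne_zero

end NormalizedFactors

section Polynomial

variable {K : Type} [Field K] {A B : K[X]} {S : Finset K[X]}

lemma squarefree_of_muFF_ne_zero (h : muFF B ≠ 0) : Squarefree B := by
  by_contra hsq
  exact h (if_neg hsq)

lemma NSet_eq_image_natDegree (hB : B ≠ 0) :
    NSet B = (normalizedFactors B).toFinset.image natDegree := by
  ext d
  simp only [NSet, mem_filter, mem_range, mem_image, Multiset.mem_toFinset,
    Polynomial.mem_normalizedFactors_iff hB]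
  constructor
  · rintro ⟨-, P, hm, hi, hd, rfl⟩
    exact ⟨P, ⟨hi, hm, hd⟩, rfl⟩
  · rintro ⟨P, ⟨hi, hm, hd⟩, rfl⟩
    exact ⟨Nat.lt_succ_of_le (natDegree_le_of_dvd hd hB), P, hm, hi, hd, rfl⟩

lemma toFinset_normalizedFactors_nonempty_iff (hA : A.Monic) :
    (normalizedFactors A).toFinset.Nonempty ↔ A ≠ 1 := by
  rw [Multiset.toFinset_nonempty, Ne, normalizedFactors_eq_zero_iff hA.ne_zero, hA.isUnit_iff]

lemma monic_prod_of_subset_normalizedFactors (hA : A ≠ 0)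
    (hS : S ⊆ (normalizedFactors A).toFinset) : (∏ p ∈ S, p).Monic :=
  monic_prod_of_monic _ _ fun _ hp =>
    ((Polynomial.mem_normalizedFactors_iff hA).mp (Multiset.mem_toFinset.mp (hS hp))).2.1

lemma muFF_prod_of_subset_normalizedFactors (hA : A ≠ 0)
    (hS : S ⊆ (normalizedFactors A).toFinset) : muFF (∏ p ∈ S, p) = (-1) ^ #S := by
  rw [muFF, if_pos (squarefree_prod_of_subset_normalizedFactors hA hS),
    normalizedFactors_prod_of_subset_normalizedFactors hS, val_toFinset]

lemma OmegaFF_prod_of_subset_normalizedFactors (hA : A ≠ 0)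
    (hS : S ⊆ (normalizedFactors A).toFinset) : OmegaFF (∏ p ∈ S, p) = #(S.image natDegree) := by
  rw [OmegaFF, NSet_eq_image_natDegree
      (ne_zero_of_dvd_ne_zero hA (prod_dvd_of_subset_normalizedFactors hA hS)),
    normalizedFactors_prod_of_subset_normalizedFactors hS, val_toFinset]

lemma mem_image_prod_powerset_normalizedFactors_iff (hA : A ≠ 0) :
    B ∈ (normalizedFactors A).toFinset.powerset.image (fun S => ∏ p ∈ S, p) ↔
      B.Monic ∧ B ∣ A ∧ Squarefree B := by
  constructor
  · rw [mem_image]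
    rintro ⟨S, hS, rfl⟩
    rw [mem_powerset] at hS
    exact ⟨monic_prod_of_subset_normalizedFactors hA hS,
      prod_dvd_of_subset_normalizedFactors hA hS, squarefree_prod_of_subset_normalizedFactors hA hS⟩
  · rintro ⟨hB, hBA, hsq⟩
    have hsub : (normalizedFactors B).toFinset ⊆ (normalizedFactors A).toFinset :=
      Multiset.toFinset_subset.mpr (Multiset.subset_of_le
        ((dvd_iff_normalizedFactors_le_normalizedFactors hB.ne_zero hA).mp hBA))
    refine mem_image.mpr ⟨_, mem_powerset.mpr hsub, eq_of_monic_of_associated ?_ hB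
      (associated_prod_toFinset_normalizedFactors hsq)⟩
    exact monic_prod_of_subset_normalizedFactors hB.ne_zero subset_rfl

lemma card_image_natDegree_normalizedFactors_eq_one_iff (hA : A.Monic) :
    #((normalizedFactors A).toFinset.image natDegree) = 1 ↔
      A ≠ 1 ∧ ∃ d, ∀ P : K[X], P.Monic → Irreducible P → P ∣ A → P.natDegree = d := by
  rw [card_image_eq_one_iff, toFinset_normalizedFactors_nonempty_iff hA]
  simp only [Multiset.mem_toFinset, Polynomial.mem_normalizedFactors_iff hA.ne_zero]
  exact and_congr_right fun _ => exists_congr fun d =>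
    ⟨fun h P hm hi hd => h P ⟨hi, hm, hd⟩, fun h P ⟨hi, hm, hd⟩ => h P hm hi hd⟩

end Polynomial

/-- Corollary 4.4: `∑_{B ∣ A} μ(B) Ω(B)` equals `-1` if `A` is a nonempty product of primes
all of the same degree, and `0` otherwise. -/
theorem stmt6 (A : Polynomial F) (hA : A.Monic) :
    ∑ᶠ B ∈ {B : Polynomial F | B.Monic ∧ B ∣ A}, (muFF B : ℤ) * (OmegaFF B : ℤ)
      = if A ≠ 1 ∧ ∃ d : ℕ, ∀ P : Polynomial F,
            P.Monic → Irreducible P → P ∣ A → P.natDegree = d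
        then -1 else 0 := by
  have hA0 := hA.ne_zero
  set Ps := (normalizedFactors A).toFinset
  have hsupport {B : F[X]} (hB : (muFF B : ℤ) * OmegaFF B ≠ 0) :
      B ∈ {B : F[X] | B.Monic ∧ B ∣ A} ↔ B ∈ Ps.powerset.image (fun S => ∏ p ∈ S, p) := by
    have hsq := squarefree_of_muFF_ne_zero (left_ne_zero_of_mul hB)
    rw [mem_image_prod_powerset_normalizedFactors_iff hA0]
    exact ⟨fun ⟨hm, hd⟩ => ⟨hm, hd, hsq⟩, fun ⟨hm, hd, _⟩ => ⟨hm, hd⟩⟩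
  have hterm (S) (hS : S ∈ Ps.powerset) :
      (muFF (∏ p ∈ S, p) : ℤ) * OmegaFF (∏ p ∈ S, p) = (-1) ^ #S * #(S.image natDegree) := by
    rw [muFF_prod_of_subset_normalizedFactors hA0 (mem_powerset.mp hS),
      OmegaFF_prod_of_subset_normalizedFactors hA0 (mem_powerset.mp hS)]
  rw [finsum_cond_eq_sum_of_cond_iff _ hsupport, sum_image injOn_prod_powerset_normalizedFactors,
    sum_congr rfl hterm, sum_powerset_neg_one_pow_card_mul_card_image]
  exact if_congr (card_image_natDegree_normalizedFactors_eq_one_iff hA) rfl rfl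
end

section
/- Let q be a prime power. There is a constant C (depending only on q) such that for every positive integer x and every positive divisor d of x, the number of monic polynomials B ∈ 𝔽_q[T] with deg B = x all of whose prime factors have degree exactly d is at most C·q^x/x. -/
open Filter Topology Polynomial Asymptotics
open scoped Classical

variable {F : Type} [Field F] [Fintype F]

/-! A monic `B` of degree `x = d * m` all of whose prime factors have degree `d` is the product of
a multiset of `m` monic irreducibles of degree `d`. These all divide `X ^ q ^ d - X`, so there are
`N ≤ q ^ d / d` of them. For `d ≥ 2` this gives at most `N ^ m ≤ q ^ x / d ^ m ≤ q ^ x / x`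
polynomials `B`. For `d = 1` the multiset is determined by `q` multiplicities in `[0, x]`, so there
are at most `(x + 1) ^ q`, which is `O(q ^ x / x)`. -/

open UniqueFactorizationMonoid

namespace Sym

theorem ofVector_surjective {α : Type*} (k : ℕ) :
    Function.Surjective (ofVector : List.Vector α k → Sym α k) := by
  rintro ⟨s, hs⟩
  induction s using Quotient.inductionOn with
  | h l => exact ⟨⟨l, hs⟩, rfl⟩

variable {α : Type*} [Finite α]

theorem natCard_le_natCard_pow (k : ℕ) : Nat.card (Sym α k) ≤ Nat.card α ^ k :=
  calc Nat.card (Sym α k) ≤ Nat.card (List.Vector α k) :=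
        Nat.card_le_card_of_surjective _ (ofVector_surjective k)
    _ = Nat.card α ^ k := by
        rw [Nat.card_congr (Equiv.vectorEquivFin _ _), Nat.card_fun, Nat.card_fin]

theorem natCard_le_succ_pow_natCard (k : ℕ) : Nat.card (Sym α k) ≤ (k + 1) ^ Nat.card α := by
  let multiplicities : Sym α k → α → Fin (k + 1) := fun s a =>
    ⟨s.1.count a, Nat.lt_succ_of_le ((Multiset.count_le_card a s.1).trans_eq s.2)⟩
  have : Function.Injective multiplicities := fun s t hst =>
    Sym.ext (Multiset.ext.2 fun a => congrArg Fin.val (congrFun hst a))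
  calc Nat.card (Sym α k) ≤ Nat.card (α → Fin (k + 1)) := Nat.card_le_card_of_injective _ this
    _ = (k + 1) ^ Nat.card α := by rw [Nat.card_fun, Nat.card_fin]

end Sym

namespace Polynomial

theorem finite_setOf_monic_natDegree_eq {R : Type*} [Ring R] [Nontrivial R] [Finite R] (n : ℕ) :
    {p : R[X] | p.Monic ∧ p.natDegree = n}.Finite :=
  Set.finite_coe_iff.mp <|
    Finite.of_equiv _ ((monicEquivDegreeLT n).trans (degreeLTEquiv R n).toEquiv).symm

variable (K : Type*) [Field K]

def monicIrreducibleOfDegree (d : ℕ) : Set K[X] :=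
  {P | P.Monic ∧ Irreducible P ∧ P.natDegree = d}

def monicWithFactorsOfDegree (d x : ℕ) : Set K[X] :=
  {B | B.Monic ∧ B.natDegree = x ∧
    ∀ P : K[X], P.Monic → Irreducible P → P ∣ B → P.natDegree = d}

variable {K}

instance [Finite K] (d : ℕ) : Finite (monicIrreducibleOfDegree K d) :=
  ((finite_setOf_monic_natDegree_eq d).subset fun _ hP => ⟨hP.1, hP.2.2⟩).to_subtype

theorem mul_natCard_monicIrreducibleOfDegree_le [Finite K] {d : ℕ} (hd : 0 < d) :
    d * Nat.card (monicIrreducibleOfDegree K d) ≤ Nat.card K ^ d := by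
  have := Fintype.ofFinite (monicIrreducibleOfDegree K d)
  have hq : 1 < Nat.card K := Finite.one_lt_card
  have hne : (X ^ Nat.card K ^ d - X : K[X]) ≠ 0 :=
    FiniteField.X_pow_card_pow_sub_X_ne_zero K hd.ne' hq
  have hdvd : ∏ P : monicIrreducibleOfDegree K d, (P : K[X]) ∣ X ^ Nat.card K ^ d - X := by
    refine Finset.prod_dvd_of_coprime ?_ fun P _ => ?_
    · intro P _ Q _ hPQ
      rw [Function.onFun, P.2.2.1.coprime_iff_not_dvd]
      exact fun h => hPQ <| Subtype.ext <|
        eq_of_monic_of_associated P.2.1 Q.2.1 (P.2.2.1.associated_of_dvd Q.2.2.1 h)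
    · obtain ⟨P, -, hPi, hPd⟩ := P
      exact hPd ▸ hPi.natDegree_dvd_iff_dvd_X_pow_card_pow_sub_X.mp dvd_rfl
  have hdeg : (∏ P : monicIrreducibleOfDegree K d, (P : K[X])).natDegree =
      Nat.card (monicIrreducibleOfDegree K d) * d := by
    rw [natDegree_prod _ _ fun P _ => P.2.2.1.ne_zero, Finset.sum_congr rfl fun P _ => P.2.2.2,
      Finset.sum_const, smul_eq_mul, Finset.card_univ, Nat.card_eq_fintype_card]
  have := natDegree_le_of_dvd hdvd hne
  rwa [hdeg, FiniteField.X_pow_card_pow_sub_X_natDegree_eq K hd.ne' hq, mul_comm] at this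

theorem monicWithFactorsOfDegree_subset_range {d : ℕ} (hd : 0 < d) (m : ℕ) :
    monicWithFactorsOfDegree K d (d * m) ⊆
      Set.range fun s : Sym (monicIrreducibleOfDegree K d) m => (s.1.map (↑)).prod := by
  rintro B ⟨hBm, hBdeg, hBfac⟩
  have hfac : ∀ P ∈ normalizedFactors B, P ∈ monicIrreducibleOfDegree K d := fun P hP => by
    obtain ⟨hPi, hPm, hPB⟩ := (Polynomial.mem_normalizedFactors_iff hBm.ne_zero).mp hP
    exact ⟨hPm, hPi, hBfac P hPm hPi hPB⟩
  obtain ⟨t, ht⟩ : ∃ t : Multiset (monicIrreducibleOfDegree K d),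
      t.map (↑) = normalizedFactors B := CanLift.prf _ hfac
  have hprod : (t.map (↑)).prod = B := by
    rw [ht, prod_normalizedFactors_eq hBm.ne_zero, hBm.normalize_eq_self]
  have hcard : Multiset.card t = m := by
    have hdeg := congrArg natDegree hprod
    rw [natDegree_multiset_prod_of_monic _ fun P hP => by
        obtain ⟨P, -, rfl⟩ := Multiset.mem_map.mp hP
        exact P.2.1,
      Multiset.map_map, Multiset.map_congr rfl fun P _ => P.2.2.2, Multiset.map_const',
      Multiset.sum_replicate, smul_eq_mul, hBdeg, mul_comm] at hdeg
    exact Nat.eq_of_mul_eq_mul_left hd hdeg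
  exact ⟨⟨t, hcard⟩, hprod⟩

theorem ncard_monicWithFactorsOfDegree_le [Finite K] {d : ℕ} (hd : 0 < d) (m : ℕ) :
    (monicWithFactorsOfDegree K d (d * m)).ncard ≤
      Nat.card (Sym (monicIrreducibleOfDegree K d) m) :=
  (Set.ncard_le_ncard (monicWithFactorsOfDegree_subset_range hd m) (Set.finite_range _)).trans <|
    (Nat.card_coe_set_eq _).symm.trans_le (Finite.card_range_le _)

theorem ncard_monicWithFactorsOfDegree_mul_le [Finite K] {d : ℕ} (hd : 2 ≤ d) (m : ℕ) :
    (monicWithFactorsOfDegree K d (d * m)).ncard * (d * m) ≤ Nat.card K ^ (d * m) :=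
  calc (monicWithFactorsOfDegree K d (d * m)).ncard * (d * m)
      ≤ Nat.card (monicIrreducibleOfDegree K d) ^ m * d ^ m :=
        Nat.mul_le_mul ((ncard_monicWithFactorsOfDegree_le (by omega) m).trans
          (Sym.natCard_le_natCard_pow m)) (Nat.mul_le_pow (by omega) m)
    _ = (d * Nat.card (monicIrreducibleOfDegree K d)) ^ m := by rw [mul_pow, mul_comm]
    _ ≤ Nat.card K ^ (d * m) := pow_mul (Nat.card K) d m ▸
        Nat.pow_le_pow_left (mul_natCard_monicIrreducibleOfDegree_le (by omega)) m

theorem ncard_monicWithFactorsOfDegree_one_le [Finite K] (x : ℕ) :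
    (monicWithFactorsOfDegree K 1 x).ncard ≤ (x + 1) ^ Nat.card K := by
  calc (monicWithFactorsOfDegree K 1 x).ncard
      ≤ Nat.card (Sym (monicIrreducibleOfDegree K 1) x) := by
        simpa using ncard_monicWithFactorsOfDegree_le (K := K) one_pos x
    _ ≤ (x + 1) ^ Nat.card (monicIrreducibleOfDegree K 1) := Sym.natCard_le_succ_pow_natCard x
    _ ≤ (x + 1) ^ Nat.card K := Nat.pow_le_pow_right x.succ_pos <| by
        simpa using mul_natCard_monicIrreducibleOfDegree_le (K := K) one_pos

end Polynomial

theorem exists_pow_le_mul_pow (k : ℕ) {r : ℝ} (hr : 1 < r) :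
    ∃ C : ℝ, ∀ n : ℕ, (n : ℝ) ^ k ≤ C * r ^ n := by
  obtain ⟨C, hC⟩ := (tendsto_pow_const_div_const_pow_of_one_lt k hr).bddAbove_range
  exact ⟨C, fun n => (div_le_iff₀ (by positivity)).mp (hC ⟨n, rfl⟩)⟩

/-- There is a constant `C` (depending only on `q`) such that for all `0 < d ∣ x`, the number
of monic polynomials of degree `x` all of whose prime factors have degree exactly `d` is at
most `C q^x / x`. -/
theorem stmt10 :
    ∃ C : ℝ, ∀ x : ℕ, 0 < x → ∀ d : ℕ, 0 < d → d ∣ x →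
      ({B : Polynomial F | B.Monic ∧ B.natDegree = x ∧
          ∀ P : Polynomial F, P.Monic → Irreducible P → P ∣ B → P.natDegree = d}.ncard : ℝ)
        ≤ C * (Fintype.card F : ℝ) ^ x / (x : ℝ) := by
  rw [Fintype.card_eq_nat_card]
  set q := Nat.card F
  have hq : (1 : ℝ) < q := by exact_mod_cast Finite.one_lt_card
  obtain ⟨C, hC⟩ := exists_pow_le_mul_pow (q + 1) hq
  refine ⟨max 1 (C * q), fun x hx d hd ⟨m, hm⟩ => ?_⟩
  rw [le_div_iff₀ (by positivity)]
  change ((monicWithFactorsOfDegree F d x).ncard : ℝ) * x ≤ _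
  rcases (by omega : d = 1 ∨ 2 ≤ d) with rfl | hd2
  · calc ((monicWithFactorsOfDegree F 1 x).ncard : ℝ) * x ≤ ((x + 1 : ℕ) : ℝ) ^ (q + 1) := by
          rw [pow_succ]
          exact mul_le_mul (by exact_mod_cast ncard_monicWithFactorsOfDegree_one_le x)
            (by push_cast; linarith) (by positivity) (by positivity)
      _ ≤ C * q * q ^ x := by rw [mul_assoc, ← pow_succ']; exact hC (x + 1)
      _ ≤ max 1 (C * q) * q ^ x := by gcongr; exact le_max_right _ _
  · subst hm
    calc ((monicWithFactorsOfDegree F d (d * m)).ncard : ℝ) * ((d * m : ℕ) : ℝ)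
        ≤ (q : ℝ) ^ (d * m) := by exact_mod_cast ncard_monicWithFactorsOfDegree_mul_le hd2 m
      _ ≤ max 1 (C * q) * q ^ (d * m) := le_mul_of_one_le_left (by positivity) (le_max_left _ _)
end
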